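/- Let K be a field of characteristic zero and x + H a quasi-translation over K. If there exists T ∈ GL_n(K) and 0 ≤ s < n such that for Ĥ := T⁻¹H(Tx) one has Ĥ_i = 0 for all i ≤ s and Ĥ_i ∈ K[x_1,...,x_s] for all i > s, then (JH)·(JH)|_{x=y} = 0, i.e., JH has strong nilpotency index at most two. -/

import Mathlib

/-!
Conjugating by `T` gives, by the chain rule, `JH = T · (JĤ ∘ T⁻¹) · T⁻¹`, hence
`JH(x) · JH(y) = T · JĤ(T⁻¹x) · JĤ(T⁻¹y) · T⁻¹`. For every index `j`, either `j ≤ s` and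
`Ĥ_j = 0`, so row `j` of `JĤ` vanishes, or `j > s` and no `Ĥ_i` involves `x_j`, so
column `j` of `JĤ` vanishes. Thus every term of the product `JĤ(a) · JĤ(b)` is zero,
whatever `a` and `b`.
-/

open MvPolynomial

/-- The Jacobian matrix `(∂H_i/∂x_j)` of a polynomial map `H`. -/
noncomputable def jac {K : Type} [CommRing K] {n : ℕ}
    (H : Fin n → MvPolynomial (Fin n) K) :
    Matrix (Fin n) (Fin n) (MvPolynomial (Fin n) K) :=
  Matrix.of fun i j => pderiv j (H i)

/-- `(JH)|_{x=x}`: the Jacobian, viewed in the larger ring with variables `x ⊕ y`. -/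
noncomputable def jacX {K : Type} [CommRing K] {n : ℕ}
    (H : Fin n → MvPolynomial (Fin n) K) :
    Matrix (Fin n) (Fin n) (MvPolynomial (Fin n ⊕ Fin n) K) :=
  (jac H).map (rename Sum.inl)

/-- `(JH)|_{x=y}`: the Jacobian with the fresh tuple `y` substituted for `x`. -/
noncomputable def jacY {K : Type} [CommRing K] {n : ℕ}
    (H : Fin n → MvPolynomial (Fin n) K) :
    Matrix (Fin n) (Fin n) (MvPolynomial (Fin n ⊕ Fin n) K) :=
  (jac H).map (rename Sum.inr)

/-- `H(y)`: the map `H` with the fresh tuple `y` substituted for `x`. -/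
noncomputable def HY {K : Type} [CommRing K] {n : ℕ}
    (H : Fin n → MvPolynomial (Fin n) K) : Fin n → MvPolynomial (Fin n ⊕ Fin n) K :=
  fun i => rename Sum.inr (H i)

/-- The polynomial map `T⁻¹ ∘ H ∘ T`, i.e. `x ↦ T⁻¹·H(T·x)`. -/
noncomputable def conjH {K : Type} [Field K] {n : ℕ}
    (T : Matrix (Fin n) (Fin n) K) (H : Fin n → MvPolynomial (Fin n) K) :
    Fin n → MvPolynomial (Fin n) K :=
  fun i => ∑ j, C (T⁻¹ i j) * aeval (fun l => ∑ k, C (T l k) * X k) (H j)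

open Matrix

namespace MvPolynomial

variable {R : Type*} [CommSemiring R] {σ τ : Type*}

theorem pderiv_aeval [Fintype σ] (g : σ → MvPolynomial τ R) (j : τ) (p : MvPolynomial σ R) :
    pderiv j (aeval g p) = ∑ l, aeval g (pderiv l p) * pderiv j (g l) := by
  classical
  induction p using MvPolynomial.induction_on with
  | C a => simp
  | add p q hp hq => simp only [map_add, hp, hq, add_mul, Finset.sum_add_distrib]
  | mul_X p i hp =>
    simp only [map_mul, aeval_X, Derivation.leibniz, pderiv_X, smul_eq_mul, hp, map_add,
      add_mul, Finset.sum_add_distrib, Finset.mul_sum, Pi.single_apply, mul_ite, mul_one, mul_zero,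
      apply_ite (aeval g), map_zero, ite_mul, zero_mul, Finset.sum_ite_eq, Finset.mem_univ, if_true]
    congr 1
    exact Finset.sum_congr rfl fun l _ => by ring

end MvPolynomial

section Jacobian

variable {R : Type} [CommRing R] {n : ℕ}

theorem jac_aeval (g H : Fin n → MvPolynomial (Fin n) R) :
    jac (fun i => aeval g (H i)) = (jac H).map (aeval g) * jac g := by
  ext i j : 1
  simp only [jac, of_apply, map_apply, mul_apply]
  exact pderiv_aeval g j (H i)

theorem jac_mulVec_map_C (M : Matrix (Fin n) (Fin n) R) (F : Fin n → MvPolynomial (Fin n) R) :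
    jac (M.map C *ᵥ F) = M.map C * jac F := by
  ext i j : 1
  simp [jac, mulVec, dotProduct, mul_apply]

theorem jac_X : jac (X : Fin n → MvPolynomial (Fin n) R) = 1 := by
  classical
  ext i j : 1
  simp [jac, pderiv_X, one_apply, Pi.single_apply]

end Jacobian

section LinearChange

variable {R : Type*} [CommSemiring R] {σ : Type*} [Fintype σ]

noncomputable def linSubst (T : Matrix σ σ R) : MvPolynomial σ R →ₐ[R] MvPolynomial σ R :=
  aeval (T.map C *ᵥ X)

theorem linSubst_linSubst (S T : Matrix σ σ R) (p : MvPolynomial σ R) :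
    linSubst S (linSubst T p) = linSubst (T * S) p := by
  rw [linSubst, linSubst, linSubst, ← AlgHom.comp_apply, comp_aeval]
  congr 2
  funext l
  simp only [mulVec, dotProduct, map_apply, map_sum, map_mul, aeval_C, aeval_X, algebraMap_eq,
    Finset.mul_sum, mul_apply, Finset.sum_mul, mul_assoc]
  exact Finset.sum_comm

theorem linSubst_one [DecidableEq σ] (p : MvPolynomial σ R) : linSubst 1 p = p := by
  rw [linSubst, Matrix.map_one C C_0 C_1, one_mulVec, aeval_X_left_apply]

end LinearChange

section Conjugation

variable {K : Type} [Field K] {n : ℕ}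

theorem conjH_eq_mulVec (T : Matrix (Fin n) (Fin n) K) (H : Fin n → MvPolynomial (Fin n) K) :
    conjH T H = T⁻¹.map C *ᵥ fun j => linSubst T (H j) :=
  rfl

theorem conjH_conjH (S T : Matrix (Fin n) (Fin n) K) (H : Fin n → MvPolynomial (Fin n) K) :
    conjH T (conjH S H) = conjH (S * T) H := by
  funext i
  simp only [conjH_eq_mulVec, ← linSubst_linSubst, Matrix.mul_inv_rev, Matrix.map_mul]
  rw [← mulVec_mulVec]
  congr 1
  funext j
  rw [← AlgHom.coe_toRingHom, RingHom.map_mulVec, Matrix.map_map]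
  congr 2
  ext a b : 2
  simp [linSubst]

theorem conjH_one (H : Fin n → MvPolynomial (Fin n) K) : conjH 1 H = H := by
  funext i
  simp [conjH_eq_mulVec, linSubst_one, Matrix.map_one C C_0 C_1]

theorem jac_conjH (T : Matrix (Fin n) (Fin n) K) (H : Fin n → MvPolynomial (Fin n) K) :
    jac (conjH T H) = T⁻¹.map C * ((jac H).map (linSubst T) * T.map C) := by
  rw [conjH_eq_mulVec, jac_mulVec_map_C]
  simp only [linSubst]
  rw [jac_aeval, jac_mulVec_map_C, jac_X, Matrix.mul_one]

theorem jac_eq_of_conjH {T : Matrix (Fin n) (Fin n) K} (hT : IsUnit T.det)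
    (H : Fin n → MvPolynomial (Fin n) K) :
    jac H = T.map C * ((jac (conjH T H)).map (linSubst T⁻¹) * T⁻¹.map C) := by
  conv_lhs => rw [← conjH_one H, ← Matrix.mul_nonsing_inv T hT, ← conjH_conjH]
  rw [jac_conjH, Matrix.nonsing_inv_nonsing_inv T hT]

end Conjugation

theorem Matrix.mul_eq_zero_of_forall_col_or_row {l m o α : Type*} [Fintype m]
    [NonUnitalNonAssocSemiring α] {M : Matrix l m α} {N : Matrix m o α}
    (h : ∀ j, (∀ i, M i j = 0) ∨ ∀ k, N j k = 0) : M * N = 0 := by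
  ext i k
  refine Finset.sum_eq_zero fun j _ => ?_
  rcases h j with hM | hN
  · simp [hM]
  · simp [hN]

theorem map_jac_mul_map_jac_eq_zero {R A : Type} [CommRing R] [CommRing A] [Algebra R A] {n : ℕ}
    {G : Fin n → MvPolynomial (Fin n) R} {s : ℕ} (h1 : ∀ i : Fin n, (i : ℕ) < s → G i = 0)
    (h2 : ∀ i, G i ∈ supported R {k : Fin n | (k : ℕ) < s})
    (f g : MvPolynomial (Fin n) R →ₐ[R] A) :
    (jac G).map f * (jac G).map g = 0 := by
  refine Matrix.mul_eq_zero_of_forall_col_or_row fun j => ?_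
  by_cases hj : (j : ℕ) < s
  · right
    intro k
    simp [jac, h1 j hj]
  · left
    intro i
    have : j ∉ (G i).vars := fun hmem => hj (mem_supported.mp (h2 i) hmem)
    simp [jac, pderiv_eq_zero_of_notMem_vars this]

theorem map_jac_eq_of_conjH {K A : Type} [Field K] [CommRing A] [Algebra K A] {n : ℕ}
    {T : Matrix (Fin n) (Fin n) K} (hT : IsUnit T.det) (H : Fin n → MvPolynomial (Fin n) K)
    (f : MvPolynomial (Fin n) K →ₐ[K] A) :
    (jac H).map f = T.map (algebraMap K A) *
      ((jac (conjH T H)).map (f.comp (linSubst T⁻¹)) * T⁻¹.map (algebraMap K A)) := by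
  rw [jac_eq_of_conjH hT H]
  simp [Matrix.map_map, Function.comp_def]

theorem stmt16 {K : Type} [Field K] {n : ℕ}
    (H : Fin n → MvPolynomial (Fin n) K)
    (T : Matrix (Fin n) (Fin n) K) (hT : IsUnit T.det)
    (s : ℕ)
    (h1 : ∀ i : Fin n, (i : ℕ) < s → conjH T H i = 0)
    (h2 : ∀ i : Fin n, s ≤ (i : ℕ) →
      conjH T H i ∈ supported K {k : Fin n | (k : ℕ) < s}) :
    jacX H * jacY H = 0 := by
  have hsupp : ∀ i, conjH T H i ∈ supported K {k : Fin n | (k : ℕ) < s} := fun i =>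
    (lt_or_ge (i : ℕ) s).elim (fun hi => h1 i hi ▸ zero_mem _) (h2 i)
  set T' := T.map (algebraMap K (MvPolynomial (Fin n ⊕ Fin n) K))
  set Tinv' := T⁻¹.map (algebraMap K (MvPolynomial (Fin n ⊕ Fin n) K))
  have hinv : Tinv' * T' = 1 := by
    rw [← Matrix.map_mul, Matrix.nonsing_inv_mul T hT, Matrix.map_one _ (map_zero _) (map_one _)]
  rw [jacX, jacY, map_jac_eq_of_conjH hT H (rename Sum.inl),
    map_jac_eq_of_conjH hT H (rename Sum.inr)]
  simp only [Matrix.mul_assoc]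
  rw [← Matrix.mul_assoc Tinv' T', hinv, Matrix.one_mul,
    ← Matrix.mul_assoc ((jac (conjH T H)).map _), map_jac_mul_map_jac_eq_zero h1 hsupp,
    Matrix.zero_mul, Matrix.mul_zero]
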